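/- Let N be a set partitioned as N = N₀ ∪ N₁ (disjoint), let φ₀ : 𝒫(N₀) → 𝒫(N₀) and φ₁ : 𝒫(N₁) → 𝒫(N₁) be monotone, let ∇ : 𝒫(N₀) → 𝒫(N₁) be a monotone map with ∇(X) = N₁ whenever X = N₀, and define ψ : 𝒫(N) → 𝒫(N) by ψ(X) = φ₀(X ∩ N₀) ∪ (φ₁(X ∩ N₁) ∩ ∇(X ∩ N₀)). Suppose φ₀^α(∅) = N₀. Then ψ^δ(∅) ∩ N₀ = φ₀^δ(∅) for every ordinal δ, and φ₁^γ(∅) ⊆ ψ^{α+γ}(∅) ∩ N₁ for every ordinal γ. Consequently, if moreover φ₁^β(∅) = N₁, then ψ^{α+β}(∅) = N. -/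

import Mathlib

/-!
On `N₀` the map `ψ` acts as `φ₀`, since the `φ₁`-part of `ψ X` lies in `N₁`; hence the `N₀`-part
of every `ψ`-iterate is the corresponding `φ₀`-iterate. From stage `α` on the `N₀`-part is all of
`N₀`, so the gate `∇(X ∩ N₀)` is all of `N₁` and `ψ` contains `φ₁` on `N₁`; the `φ₁`-iteration is
then replayed inside the `ψ`-iteration, shifted by `α`.
-/

open Set

universe u v
/-- Ordinal-indexed iterates of a map on a powerset, starting from ∅,
taking unions at limit stages. -/
noncomputable def iter {A : Type u} (f : Set A → Set A) (o : Ordinal.{v}) : Set A :=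
  Ordinal.limitRecOn o ∅ (fun _ ih => f ih)
    (fun o _ ih => ⋃ (b : Ordinal.{v}) (h : b < o), ih b h)

section Iterates

variable {A : Type u} {f g : Set A → Set A}

theorem iter_zero (f : Set A → Set A) : iter f (0 : Ordinal.{v}) = ∅ :=
  Ordinal.limitRecOn_zero ..

theorem iter_add_one (f : Set A → Set A) (o : Ordinal.{v}) : iter f (o + 1) = f (iter f o) :=
  Ordinal.limitRecOn_add_one ..

theorem iter_limit (f : Set A → Set A) {o : Ordinal.{v}} (ho : Order.IsSuccLimit o) :
    iter f o = ⋃ (b : Ordinal.{v}) (_ : b < o), iter f b :=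
  Ordinal.limitRecOn_limit _ _ _ _ ho

theorem subset_iter_of_lt (f : Set A → Set A) {b o : Ordinal.{v}} (ho : Order.IsSuccLimit o)
    (hb : b < o) : iter f b ⊆ iter f o := by
  rw [iter_limit f ho]
  exact subset_iUnion₂ (s := fun b' (_ : b' < o) => iter f b') b hb

theorem iter_subset_apply_iter (hf : Monotone f) (o : Ordinal.{v}) :
    iter f o ⊆ f (iter f o) := by
  induction o using Ordinal.limitRecOn with
  | zero => rw [iter_zero]; exact empty_subset _
  | add_one o ih => rw [iter_add_one]; exact hf ih
  | limit o ho ih =>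
      conv_lhs => rw [iter_limit f ho]
      exact iUnion₂_subset fun b hb => (ih b hb).trans (hf (subset_iter_of_lt f ho hb))

theorem monotone_iter (hf : Monotone f) : Monotone (iter f : Ordinal.{v} → Set A) := by
  intro b c hbc
  induction c using Ordinal.limitRecOn with
  | zero => rw [nonpos_iff_eq_zero.1 hbc]
  | add_one c ih =>
      rcases hbc.eq_or_lt with h | h
      · rw [h]
      · rw [iter_add_one]
        exact (ih (Order.lt_add_one_iff.1 h)).trans (iter_subset_apply_iter hf c)
  | limit c hc ih =>
      rcases hbc.eq_or_lt with h | h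
      · rw [h]
      · exact subset_iter_of_lt f hc h

theorem iter_subset {T : Set A} (hT : ∀ S, f S ⊆ T) (o : Ordinal.{v}) : iter f o ⊆ T := by
  induction o using Ordinal.limitRecOn with
  | zero => rw [iter_zero]; exact empty_subset _
  | add_one o ih => rw [iter_add_one]; exact hT _
  | limit o ho ih => rw [iter_limit f ho]; exact iUnion₂_subset ih

theorem iter_eq_of_le {T : Set A} (hf : Monotone f) (hT : ∀ S, f S ⊆ T) {α o : Ordinal.{v}}
    (hα : iter f α = T) (hαo : α ≤ o) : iter f o = T :=
  (iter_subset hT o).antisymm (hα ▸ monotone_iter hf hαo)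

theorem iter_inter_eq {T : Set A} (h : ∀ X, g X ∩ T = f (X ∩ T)) (o : Ordinal.{v}) :
    iter g o ∩ T = iter f o := by
  induction o using Ordinal.limitRecOn with
  | zero => rw [iter_zero, iter_zero, empty_inter]
  | add_one o ih => rw [iter_add_one, iter_add_one, h, ih]
  | limit o ho ih => rw [iter_limit g ho, iter_limit f ho, iUnion₂_inter]; exact iUnion₂_congr ih

theorem iter_subset_iter_add {T : Set A} (hg : Monotone g) (hT : ∀ S, f S ⊆ T) {α : Ordinal.{v}}
    (hfg : ∀ X Y, X ⊆ Y ∩ T → iter g α ⊆ Y → f X ⊆ g Y) (γ : Ordinal.{v}) :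
    iter f γ ⊆ iter g (α + γ) := by
  induction γ using Ordinal.limitRecOn with
  | zero => rw [iter_zero]; exact empty_subset _
  | add_one γ ih =>
      rw [← add_assoc, iter_add_one, iter_add_one]
      exact hfg _ _ (subset_inter ih (iter_subset hT γ)) (monotone_iter hg le_self_add)
  | limit γ hγ ih =>
      rw [iter_limit f hγ]
      exact iUnion₂_subset fun b hb =>
        (ih b hb).trans (monotone_iter hg (add_le_add_right hb.le α))

end Iterates

theorem stmt17_general {N : Type u} (N₀ N₁ : Set N) (hdis : Disjoint N₀ N₁)
    (hun : N₀ ∪ N₁ = Set.univ)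
    (φ₀ φ₁ nab : Set N → Set N)
    (h0 : Monotone φ₀) (h1 : Monotone φ₁) (hd : Monotone nab)
    (hr0 : ∀ S, φ₀ S ⊆ N₀) (hr1 : ∀ S, φ₁ S ⊆ N₁)
    (hdN : nab N₀ = N₁)
    (ψ : Set N → Set N)
    (hψ : ∀ X, ψ X = φ₀ (X ∩ N₀) ∪ (φ₁ (X ∩ N₁) ∩ nab (X ∩ N₀)))
    (α : Ordinal.{v}) (hα : iter φ₀ α = N₀) :
    (∀ δ : Ordinal.{v}, iter ψ δ ∩ N₀ = iter φ₀ δ) ∧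
      (∀ γ : Ordinal.{v}, iter φ₁ γ ⊆ iter ψ (α + γ) ∩ N₁) ∧
      (∀ β : Ordinal.{v}, iter φ₁ β = N₁ → iter ψ (α + β) = Set.univ) := by
  have hψ_mono : Monotone ψ := fun X Y hXY => by
    rw [hψ, hψ]
    have hXY₀ := inter_subset_inter_left N₀ hXY
    have hXY₁ := inter_subset_inter_left N₁ hXY
    exact union_subset_union (h0 hXY₀) (inter_subset_inter (h1 hXY₁) (hd hXY₀))
  have hψ_N₀ (X : Set N) : ψ X ∩ N₀ = φ₀ (X ∩ N₀) := by
    have h_gate_N₀ : φ₁ (X ∩ N₁) ∩ nab (X ∩ N₀) ∩ N₀ = ∅ :=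
      (hdis.symm.mono_left (inter_subset_left.trans (hr1 _))).inter_eq
    rw [hψ, union_inter_distrib_right, inter_eq_left.2 (hr0 _), h_gate_N₀, union_empty]
  have hN₀_part := iter_inter_eq hψ_N₀
  have hψ_ge_φ₁ (X Y : Set N) (hXY : X ⊆ Y ∩ N₁) (hαY : iter ψ α ⊆ Y) : φ₁ X ⊆ ψ Y := by
    have h_gate : N₁ ⊆ nab (Y ∩ N₀) :=
      calc N₁ = nab (iter ψ α ∩ N₀) := by rw [hN₀_part, hα, hdN]
        _ ⊆ nab (Y ∩ N₀) := hd (inter_subset_inter_left N₀ hαY)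
    rw [hψ]
    exact subset_union_of_subset_right (subset_inter (h1 hXY) ((hr1 X).trans h_gate)) _
  have hN₁_part (γ : Ordinal.{v}) : iter φ₁ γ ⊆ iter ψ (α + γ) ∩ N₁ :=
    subset_inter (iter_subset_iter_add hψ_mono hr1 hψ_ge_φ₁ γ) (iter_subset hr1 γ)
  refine ⟨hN₀_part, hN₁_part, fun β hβ => ?_⟩
  rw [← univ_subset_iff, ← hun]
  refine union_subset ?_ ((hβ ▸ hN₁_part β).trans inter_subset_left)
  rw [← iter_eq_of_le h0 hr0 hα le_self_add, ← hN₀_part]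
  exact inter_subset_left

theorem stmt17 {N : Type u} (N₀ N₁ : Set N) (hdis : Disjoint N₀ N₁)
    (hun : N₀ ∪ N₁ = Set.univ)
    (φ₀ φ₁ nab : Set N → Set N)
    (h0 : Monotone φ₀) (h1 : Monotone φ₁) (hd : Monotone nab)
    (hr0 : ∀ S, φ₀ S ⊆ N₀) (hr1 : ∀ S, φ₁ S ⊆ N₁) (hrd : ∀ S, nab S ⊆ N₁)
    (hdN : nab N₀ = N₁)
    (ψ : Set N → Set N)
    (hψ : ∀ X, ψ X = φ₀ (X ∩ N₀) ∪ (φ₁ (X ∩ N₁) ∩ nab (X ∩ N₀)))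
    (α : Ordinal.{v}) (hα : iter φ₀ α = N₀) :
    (∀ δ : Ordinal.{v}, iter ψ δ ∩ N₀ = iter φ₀ δ) ∧
      (∀ γ : Ordinal.{v}, iter φ₁ γ ⊆ iter ψ (α + γ) ∩ N₁) ∧
      (∀ β : Ordinal.{v}, iter φ₁ β = N₁ → iter ψ (α + β) = Set.univ) :=
  stmt17_general N₀ N₁ hdis hun φ₀ φ₁ nab h0 h1 hd hr0 hr1 hdN ψ hψ α hα
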